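/- Let p ∈ ω* and 𝒯(p) the topology on ω* whose closed sets are the X with X = X^p. Then the 𝒯(p)-closure of every 𝒯(p)-open set is 𝒯(p)-open; that is, (ω*, 𝒯(p)) is extremally disconnected. -/

import Mathlib

/-- The Stone–Čech remainder `ω* = β(ω) \ ω`. -/
def omegaStar : Set (StoneCech ℕ) := (Set.range (stoneCechUnit : ℕ → StoneCech ℕ))ᶜ

/-- The Stone extension `f̄ : β(ω) → β(ω)` of a map `f : ω → β(ω)`. -/
noncomputable def stoneExt (f : ℕ → StoneCech ℕ) : StoneCech ℕ → StoneCech ℕ :=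
  stoneCechExtend (continuous_of_discreteTopology (f := f))

/-- `pOp p X = X^p`: the set `X` together with all its `p`-limits `f̄(p)` through countable
discrete subsets `f[ω] ⊆ X` (with `f : ω ≈ f[ω]`, i.e. `f` injective with discrete range). -/
def pOp (p : StoneCech ℕ) (X : Set (StoneCech ℕ)) : Set (StoneCech ℕ) :=
  X ∪ {y | ∃ f : ℕ → StoneCech ℕ, Function.Injective f ∧ Set.range f ⊆ X ∧
    DiscreteTopology (Set.range f) ∧ stoneExt f p = y}

/-- `X` is `𝒯(p)`-open: `X ⊆ ω*` and its complement in `ω*` is `𝒯(p)`-closed,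
i.e. fixed by the operator `X ↦ X^p`. -/
def TpOpen (p : StoneCech ℕ) (X : Set (StoneCech ℕ)) : Prop :=
  X ⊆ omegaStar ∧ pOp p (omegaStar \ X) = omegaStar \ X

/-- The `𝒯(p)`-closure of `X ⊆ ω*`: the smallest superset of `X` which is `𝒯(p)`-closed. -/
def TpClosure (p : StoneCech ℕ) (X : Set (StoneCech ℕ)) : Set (StoneCech ℕ) :=
  ⋂₀ {C | X ⊆ C ∧ C ⊆ omegaStar ∧ pOp p C = C}

/-!
Identify `βℕ` with the space of ultrafilters on `ℕ`; then `stoneExt f p` is the ultrafilter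
`p.bind (𝒰 ∘ f)`, and a countable discrete family `f` is separated by a map `γ : ℕ → ℕ` with
`γ⁻¹{k} ∈ 𝒰 (f k)`. Frolík's argument shows that two such families with disjoint ranges have
different `p`-limits: comparing their separating maps `γ`, `δ` under the common limit gives
either `δ < γ` and `γ < δ` almost everywhere, or a map `κ` fixing `p` with `κ n < n` for
`p`-many `n`, which a parity colouring of the descending chains `n > κ n > ⋯` rules out.
Hence `X ↦ X^p` preserves `𝒯(p)`-open sets. The `𝒯(p)`-interior of the closure of an open `X`
is therefore `𝒯(p)`-closed and contains `X`, so it is the closure itself.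
-/

open Set Filter Function Topology

def descentParity (τ : ℕ → ℕ) (n : ℕ) : Bool :=
  if τ n < n then !descentParity τ (τ n) else false
termination_by n

theorem descentParity_of_lt {τ : ℕ → ℕ} {n : ℕ} (h : τ n < n) :
    descentParity τ n = !descentParity τ (τ n) := by
  rw [descentParity, if_pos h]

namespace Ultrafilter

variable {α β : Type*}

theorem mem_bind {f : Ultrafilter α} {m : α → Ultrafilter β} {s : Set β} :
    s ∈ f.bind m ↔ {a | s ∈ m a} ∈ f :=
  Iff.rfl

theorem continuous_bind (m : α → Ultrafilter β) :
    Continuous fun f : Ultrafilter α ↦ f.bind m := by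
  refine ultrafilterBasis_is_basis.continuous_iff.2 ?_
  rintro _ ⟨s, rfl⟩
  exact ultrafilter_isOpen_basic {a | s ∈ m a}

theorem pure_bind (a : α) (m : α → Ultrafilter β) : (pure a : Ultrafilter α).bind m = m a :=
  ext fun _ ↦ Iff.rfl

theorem eq_pure_iff_singleton_mem {f : Ultrafilter α} {a : α} : f = pure a ↔ {a} ∈ f :=
  coe_inj.symm.trans (NeBot.eq_pure_iff inferInstance)

theorem exists_mem_notMem_of_ne {f g : Ultrafilter α} (h : f ≠ g) : ∃ s ∈ f, s ∉ g := by
  by_contra! H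
  exact h (eq_of_le H).symm

theorem Ioi_mem_of_forall_singleton_notMem {w : Ultrafilter ℕ} (h : ∀ n, {n} ∉ w) (k : ℕ) :
    Ioi k ∈ w := by
  rw [← compl_Iic, compl_mem_iff_notMem]
  intro hk
  obtain ⟨n, -, rfl⟩ := eq_pure_of_finite_mem (finite_Iic k) hk
  exact h n (mem_pure.2 rfl)

theorem map_ne_self_of_lt {p : Ultrafilter ℕ} {τ : ℕ → ℕ} (h : {n | τ n < n} ∈ p) :
    p.map τ ≠ p := by
  intro hτ
  obtain ⟨b, hb⟩ := (p.map (descentParity τ)).eq_pure_of_finite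
  have hS : descentParity τ ⁻¹' {b} ∈ p := mem_map.1 (hb ▸ mem_pure.2 rfl)
  have hτS : τ ⁻¹' (descentParity τ ⁻¹' {b}) ∈ p := mem_map.1 (hτ.symm ▸ hS)
  obtain ⟨n, ⟨hn, hnb⟩, hτnb⟩ := nonempty_of_mem (inter_mem (inter_mem h hS) hτS)
  simp_all [descentParity_of_lt hn]

variable {p : Ultrafilter ℕ} {u v : ℕ → Ultrafilter α} {γ δ : α → ℕ}

theorem map_bind_eq_map {κ : ℕ → ℕ} (hκ : {n | γ ⁻¹' {κ n} ∈ v n} ∈ p) :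
    (p.bind v).map γ = p.map κ :=
  eq_of_le fun _ hA ↦ mem_bind.2 <| mem_of_superset (inter_mem hA hκ) fun n ⟨hnA, hn⟩ ↦
    mem_of_superset hn fun j (hj : γ j = κ n) ↦ mem_preimage.2 (hj ▸ hnA)

theorem map_bind_of_fiber_mem (hγ : ∀ k, γ ⁻¹' {k} ∈ u k) : (p.bind u).map γ = p := by
  simpa using map_bind_eq_map (κ := id) (univ_mem' hγ)

/-- If `p`-many `v n` lie in a fibre `γ⁻¹{κ n}`, then `κ` fixes `p`, while choosing
`W n ∈ v n` with `W n ∉ u (κ n)` forces `κ n < n` for `p`-many `n`. -/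
theorem setOf_exists_fiber_mem_notMem_of_bind_eq (hγ : ∀ k, γ ⁻¹' {k} ∈ u k)
    (hδ : ∀ n, δ ⁻¹' {n} ∈ v n) (huv : ∀ k n, u k ≠ v n) (hq : p.bind u = p.bind v) :
    {n | ∃ k, γ ⁻¹' {k} ∈ v n} ∉ p := by
  intro hN
  choose! κ hκ using fun n (hn : n ∈ {n | ∃ k, γ ⁻¹' {k} ∈ v n}) ↦ hn
  have hκp : p.map κ = p := by
    rw [← map_bind_eq_map (mem_of_superset hN hκ), ← hq, map_bind_of_fiber_mem hγ]
  choose W hWv hWu using fun n ↦ exists_mem_notMem_of_ne (huv (κ n) n).symm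
  set T := {j | j ∈ W (δ j) ∧ γ j = κ (δ j)}
  have hT : T ∈ p.bind u := by
    rw [hq]
    refine mem_bind.2 <| mem_of_superset hN fun n hn ↦ ?_
    refine mem_of_superset (inter_mem (inter_mem (hδ n) (hWv n)) (hκ n hn)) ?_
    rintro j ⟨⟨rfl, hjW⟩, hjκ⟩
    exact ⟨hjW, hjκ⟩
  have hspread : ∀ k, T ∈ u k → ∀ n, δ ⁻¹' {n} ∉ u k := by
    intro k hTk n hn
    obtain ⟨j, ⟨⟨-, hjκ⟩, rfl⟩, hjk⟩ := nonempty_of_mem (inter_mem (inter_mem hTk hn) (hγ k))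
    refine hWu (δ j) ?_
    rw [← hjκ, hjk]
    exact mem_of_superset (inter_mem hTk hn) fun i ⟨hi, hiδ⟩ ↦ hiδ ▸ hi.1
  have hE : {j | γ j < δ j ∧ κ (δ j) = γ j} ∈ p.bind u := by
    refine mem_bind.2 <| mem_of_superset (mem_bind.1 hT) fun k hTk ↦ ?_
    have hIoi : δ ⁻¹' Ioi k ∈ u k :=
      Ioi_mem_of_forall_singleton_notMem (w := (u k).map δ) (hspread k hTk) k
    refine mem_of_superset (inter_mem (inter_mem hTk (hγ k)) hIoi) ?_
    rintro j ⟨⟨⟨-, hjκ⟩, hjk⟩, hkj⟩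
    exact ⟨hjk ▸ hkj, hjκ.symm⟩
  have hlt : {n | κ n < n} ∈ p := by
    rw [← map_bind_of_fiber_mem (p := p) hδ, ← hq, mem_map]
    exact mem_of_superset hE fun j ⟨hj, hjκ⟩ ↦ by simp [hjκ, hj]
  exact map_ne_self_of_lt hlt hκp

theorem setOf_lt_mem_bind_of_bind_eq (hγ : ∀ k, γ ⁻¹' {k} ∈ u k)
    (hδ : ∀ n, δ ⁻¹' {n} ∈ v n) (huv : ∀ k n, u k ≠ v n) (hq : p.bind u = p.bind v) :
    {j | δ j < γ j} ∈ p.bind v := by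
  have hspread : {n | ∀ k, γ ⁻¹' {k} ∉ v n} ∈ p := by
    have := compl_mem_iff_notMem.2 (setOf_exists_fiber_mem_notMem_of_bind_eq hγ hδ huv hq)
    simpa only [compl_ofPred, not_exists] using this
  refine mem_bind.2 <| mem_of_superset hspread fun n hn ↦ ?_
  have hIoi : γ ⁻¹' Ioi n ∈ v n := Ioi_mem_of_forall_singleton_notMem (w := (v n).map γ) hn n
  exact mem_of_superset (inter_mem (hδ n) hIoi) fun j ⟨(hj : δ j = n), (hnj : n < γ j)⟩ ↦
    show δ j < γ j from hj ▸ hnj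

theorem bind_ne_bind (hγ : ∀ k, γ ⁻¹' {k} ∈ u k) (hδ : ∀ n, δ ⁻¹' {n} ∈ v n)
    (huv : ∀ k n, u k ≠ v n) : p.bind u ≠ p.bind v := by
  intro hq
  have hδγ := setOf_lt_mem_bind_of_bind_eq hγ hδ huv hq
  have hγδ := setOf_lt_mem_bind_of_bind_eq hδ hγ (fun n k ↦ (huv k n).symm) hq.symm
  rw [← hq] at hδγ
  obtain ⟨j, h₁ : δ j < γ j, h₂ : γ j < δ j⟩ := nonempty_of_mem (inter_mem hδγ hγδ)
  exact lt_asymm h₁ h₂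

theorem exists_isolating_mem (hinj : Injective u)
    (hd : IsDiscrete (range u)) (k : ℕ) : ∃ A ∈ u k, ∀ j, A ∈ u j → j = k := by
  obtain ⟨U, hU, hUu⟩ := nhds_inter_eq_singleton_of_mem_discrete hd (mem_range_self k)
  obtain ⟨_, ⟨A, rfl⟩, hkA, hAU⟩ := ultrafilterBasis_is_basis.mem_nhds_iff.1 hU
  refine ⟨A, hkA, fun j hjA ↦ hinj ?_⟩
  have hj : u j ∈ U ∩ range u := ⟨hAU hjA, mem_range_self j⟩
  rwa [hUu] at hj

theorem exists_fiber_mem_of_isolating {A : ℕ → Set α}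
    (hA : ∀ k, A k ∈ u k) (hiso : ∀ k j, A k ∈ u j → j = k) :
    ∃ γ : α → ℕ, ∀ k, γ ⁻¹' {k} ∈ u k := by
  classical
  refine ⟨fun a ↦ if h : ∃ k, a ∈ A k then Nat.find h else 0, fun k ↦ ?_⟩
  have hfin : (⋃ i ∈ Iio k, A i) ∉ u k := by
    rw [finite_biUnion_mem_iff (finite_Iio k)]
    rintro ⟨i, hi, hik⟩
    exact (hiso i k hik ▸ hi : k < k).false
  refine mem_of_superset ((sdiff_mem_iff _).2 ⟨hA k, hfin⟩) fun a ⟨hak, hprev⟩ ↦ ?_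
  have h : ∃ k, a ∈ A k := ⟨k, hak⟩
  simp only [mem_preimage, mem_singleton_iff, dif_pos h]
  exact (Nat.find_eq_iff h).2 ⟨hak, fun i hi hai ↦ hprev (mem_biUnion hi hai)⟩

theorem exists_fiber_mem_of_isDiscrete (hinj : Injective u)
    (hd : IsDiscrete (range u)) : ∃ γ : α → ℕ, ∀ k, γ ⁻¹' {k} ∈ u k := by
  choose A hA hiso using exists_isolating_mem hinj hd
  exact exists_fiber_mem_of_isolating hA hiso

end Ultrafilter

section StoneCech

variable {α : Type*} [TopologicalSpace α] [DiscreteTopology α]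

noncomputable def stoneCechHomeomorphUltrafilter : StoneCech α ≃ₜ Ultrafilter α where
  toFun := stoneCechExtend (continuous_of_discreteTopology (f := (pure : α → Ultrafilter α)))
  invFun := Ultrafilter.extend stoneCechUnit
  left_inv := congrFun <| stoneCech_hom_ext
    ((continuous_ultrafilter_extend _).comp (continuous_stoneCechExtend _)) continuous_id
    (by ext; simp)
  right_inv := congrFun <| denseRange_pure.equalizer
    ((continuous_stoneCechExtend _).comp (continuous_ultrafilter_extend _)) continuous_id
    (by ext; simp)
  continuous_toFun := continuous_stoneCechExtend _
  continuous_invFun := continuous_ultrafilter_extend _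

@[simp]
theorem stoneCechHomeomorphUltrafilter_stoneCechUnit (a : α) :
    stoneCechHomeomorphUltrafilter (stoneCechUnit a) = pure a :=
  stoneCechExtend_stoneCechUnit continuous_of_discreteTopology a

end StoneCech

local notation "𝒰" => (stoneCechHomeomorphUltrafilter : StoneCech ℕ ≃ₜ Ultrafilter ℕ)

theorem stoneCechHomeomorphUltrafilter_stoneExt (f : ℕ → StoneCech ℕ) (x : StoneCech ℕ) :
    𝒰 (stoneExt f x) = (𝒰 x).bind (𝒰 ∘ f) := by
  refine congrFun (stoneCech_hom_ext ((𝒰).continuous.comp (continuous_stoneCechExtend _))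
    ((Ultrafilter.continuous_bind _).comp (𝒰).continuous) ?_) x
  ext1 n
  simp [Ultrafilter.pure_bind]

theorem mem_omegaStar_iff {x : StoneCech ℕ} : x ∈ omegaStar ↔ ∀ n, {n} ∉ 𝒰 x := by
  simp [omegaStar, ← Ultrafilter.eq_pure_iff_singleton_mem,
    ← stoneCechHomeomorphUltrafilter_stoneCechUnit, eq_comm]

theorem stoneExt_mem_omegaStar {f : ℕ → StoneCech ℕ} (hf : ∀ k, f k ∈ omegaStar)
    (x : StoneCech ℕ) : stoneExt f x ∈ omegaStar := by
  simp only [mem_omegaStar_iff, stoneCechHomeomorphUltrafilter_stoneExt] at hf ⊢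
  intro n hn
  obtain ⟨k, hk⟩ := Ultrafilter.nonempty_of_mem (Ultrafilter.mem_bind.1 hn)
  exact hf k n hk

theorem exists_fiber_mem_stoneCechHomeomorphUltrafilter {f : ℕ → StoneCech ℕ}
    (hinj : Injective f) (hd : DiscreteTopology (range f)) :
    ∃ γ : ℕ → ℕ, ∀ k, γ ⁻¹' {k} ∈ 𝒰 (f k) := by
  refine Ultrafilter.exists_fiber_mem_of_isDiscrete ((𝒰).injective.comp hinj) ?_
  convert (isDiscrete_iff_discreteTopology.2 hd).image (𝒰).isInducing using 1
  exact range_comp _ _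

theorem stoneExt_ne_stoneExt {f g : ℕ → StoneCech ℕ} (hfi : Injective f) (hgi : Injective g)
    (hfd : DiscreteTopology (range f)) (hgd : DiscreteTopology (range g))
    (hfg : ∀ k n, f k ≠ g n) (x : StoneCech ℕ) : stoneExt f x ≠ stoneExt g x := by
  obtain ⟨γ, hγ⟩ := exists_fiber_mem_stoneCechHomeomorphUltrafilter hfi hfd
  obtain ⟨δ, hδ⟩ := exists_fiber_mem_stoneCechHomeomorphUltrafilter hgi hgd
  rw [← (𝒰).injective.ne_iff, stoneCechHomeomorphUltrafilter_stoneExt,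
    stoneCechHomeomorphUltrafilter_stoneExt]
  exact Ultrafilter.bind_ne_bind hγ hδ fun k n ↦ (𝒰).injective.ne (hfg k n)

section Tp

variable {p : StoneCech ℕ}

theorem subset_pOp (X : Set (StoneCech ℕ)) : X ⊆ pOp p X :=
  subset_union_left

theorem pOp_mono {X Y : Set (StoneCech ℕ)} (h : X ⊆ Y) : pOp p X ⊆ pOp p Y :=
  union_subset_union h fun _ ⟨f, hfi, hfX, hfd, hf⟩ ↦ ⟨f, hfi, hfX.trans h, hfd, hf⟩

theorem pOp_subset_of_subset {X C : Set (StoneCech ℕ)} (hX : X ⊆ C) (hC : pOp p C = C) :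
    pOp p X ⊆ C :=
  hC ▸ pOp_mono hX

theorem pOp_omegaStar : pOp p omegaStar = omegaStar := by
  refine (union_subset subset_rfl ?_).antisymm (subset_pOp _)
  rintro _ ⟨f, -, hf, -, rfl⟩
  exact stoneExt_mem_omegaStar (fun k ↦ hf (mem_range_self k)) p

theorem pOp_subset_omegaStar {X : Set (StoneCech ℕ)} (hX : X ⊆ omegaStar) :
    pOp p X ⊆ omegaStar :=
  pOp_subset_of_subset hX pOp_omegaStar

theorem TpOpen_sUnion {S : Set (Set (StoneCech ℕ))} (hS : ∀ U ∈ S, TpOpen p U) :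
    TpOpen p (⋃₀ S) := by
  refine ⟨sUnion_subset fun U hU ↦ (hS U hU).1, Subset.antisymm (fun z hz ↦ ?_) (subset_pOp _)⟩
  refine ⟨pOp_subset_omegaStar sdiff_subset hz, fun ⟨U, hU, hzU⟩ ↦ ?_⟩
  have hsub : omegaStar \ ⋃₀ S ⊆ omegaStar \ U :=
    sdiff_subset_sdiff_right (subset_sUnion_of_mem hU)
  exact (pOp_subset_of_subset hsub (hS U hU).2 hz).2 hzU

theorem TpOpen_pOp {X : Set (StoneCech ℕ)} (hX : TpOpen p X) : TpOpen p (pOp p X) := by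
  refine ⟨pOp_subset_omegaStar hX.1, Subset.antisymm (fun z hz ↦ ?_) (subset_pOp _)⟩
  obtain hz | ⟨g, hgi, hg, hgd, rfl⟩ := hz
  · exact hz
  have hgX : range g ⊆ omegaStar \ X := fun _ hy ↦
    ⟨(hg hy).1, fun hyX ↦ (hg hy).2 (subset_pOp _ hyX)⟩
  have hgp : stoneExt g p ∈ omegaStar \ X := hX.2 ▸ Or.inr ⟨g, hgi, hgX, hgd, rfl⟩
  refine ⟨hgp.1, ?_⟩
  rintro (hgpX | ⟨f, hfi, hf, hfd, hfg⟩)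
  · exact hgp.2 hgpX
  · have hdisj : ∀ k n, f k ≠ g n := fun k n hkn ↦
      (hgX (mem_range_self n)).2 (hkn ▸ hf (mem_range_self k))
    exact stoneExt_ne_stoneExt hfi hgi hfd hgd hdisj p hfg

theorem subset_TpClosure (X : Set (StoneCech ℕ)) : X ⊆ TpClosure p X :=
  fun _ hz _ hC ↦ hC.1 hz

theorem TpClosure_subset {X C : Set (StoneCech ℕ)} (hXC : X ⊆ C) (hC : C ⊆ omegaStar)
    (hpC : pOp p C ⊆ C) : TpClosure p X ⊆ C :=
  sInter_subset_of_mem ⟨hXC, hC, hpC.antisymm (subset_pOp C)⟩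

theorem pOp_TpClosure (X : Set (StoneCech ℕ)) : pOp p (TpClosure p X) = TpClosure p X := by
  refine (subset_sInter fun C hC ↦ ?_).antisymm (subset_pOp _)
  exact hC.2.2 ▸ pOp_mono (sInter_subset_of_mem hC)

end Tp

theorem TpOpen_TpClosure_general (p : StoneCech ℕ) (X : Set (StoneCech ℕ))
    (hX : TpOpen p X) : TpOpen p (TpClosure p X) := by
  set M := ⋃₀ {U | TpOpen p U ∧ U ⊆ TpClosure p X}
  have hM : TpOpen p M := TpOpen_sUnion fun U hU ↦ hU.1
  have hMX : M ⊆ TpClosure p X := sUnion_subset fun U hU ↦ hU.2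
  have hpM : pOp p M ⊆ M :=
    subset_sUnion_of_mem ⟨TpOpen_pOp hM, pOp_subset_of_subset hMX (pOp_TpClosure X)⟩
  have hXM : TpClosure p X ⊆ M :=
    TpClosure_subset (subset_sUnion_of_mem ⟨hX, subset_TpClosure X⟩) hM.1 hpM
  rwa [← hMX.antisymm hXM]

/-- Corollary 5.8: the `𝒯(p)`-closure of every `𝒯(p)`-open set is `𝒯(p)`-open;
that is, `(ω*, 𝒯(p))` is extremally disconnected. -/
theorem TpOpen_TpClosure (p : StoneCech ℕ) (hp : p ∈ omegaStar) (X : Set (StoneCech ℕ))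
    (hX : TpOpen p X) : TpOpen p (TpClosure p X) :=
  TpOpen_TpClosure_general p X hX
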